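/- Every pseudo-diagonal channel is degradable; equivalently, every entanglement-breaking channel is anti-degradable. Concretely, if Φ^C(ρ) = Σ_k |x_k⟩⟨w_k| ρ |w_k⟩⟨x_k| is entanglement breaking and Φ(ρ) = Σ_{jk} |e_j⟩⟨e_k| ⟨x_j,x_k⟩ ⟨w_j|ρ|w_k⟩ is its complement, then the CP map Ψ with Kraus operators G_k = (1/‖x_k‖)|x_k⟩⟨e_k| satisfies Ψ∘Φ = Φ^C. -/

import Mathlib

open Matrix Kronecker BigOperators ComplexOrder

noncomputable def krausMap {n m ι : Type*} [Fintype n] [Fintype ι]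
    (A : ι → Matrix m n ℂ) : Matrix n n ℂ →ₗ[ℂ] Matrix m m ℂ where
  toFun ρ := ∑ k, A k * ρ * (A k)ᴴ
  map_add' ρ σ := by
    simp [Matrix.mul_add, Matrix.add_mul, Finset.sum_add_distrib]
  map_smul' c ρ := by
    simp [Matrix.mul_smul, Matrix.smul_mul, Finset.smul_sum]

noncomputable def complementMap {n m ι : Type*} [Fintype n] [Fintype m] [Fintype ι]
    (A : ι → Matrix m n ℂ) : Matrix n n ℂ →ₗ[ℂ] Matrix ι ι ℂ where
  toFun ρ := Matrix.of fun j k => (A j * ρ * (A k)ᴴ).trace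
  map_add' ρ σ := by
    ext j k
    simp [Matrix.mul_add, Matrix.add_mul]
  map_smul' c ρ := by
    ext j k
    simp [Matrix.mul_smul, Matrix.smul_mul]

noncomputable def choi {n m : Type*} [Fintype n] [DecidableEq n]
    (Φ : Matrix n n ℂ →ₗ[ℂ] Matrix m m ℂ) : Matrix (n × m) (n × m) ℂ :=
  Matrix.of fun p q => Φ (Matrix.single p.1 q.1 1) p.2 q.2

def IsCPTP {n m : Type*} [Fintype n] [DecidableEq n] [Fintype m]
    (Φ : Matrix n n ℂ →ₗ[ℂ] Matrix m m ℂ) : Prop :=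
  (choi Φ).PosSemidef ∧ ∀ ρ, (Φ ρ).trace = ρ.trace

def IsKrausRep {n m ι : Type*} [Fintype n] [DecidableEq n] [Fintype m] [Fintype ι]
    (A : ι → Matrix m n ℂ) (Φ : Matrix n n ℂ →ₗ[ℂ] Matrix m m ℂ) : Prop :=
  (∀ ρ, Φ ρ = ∑ k, A k * ρ * (A k)ᴴ) ∧ ∑ k, (A k)ᴴ * A k = 1

def Degradable {n m : Type*} [Fintype n] [DecidableEq n] [Fintype m] [DecidableEq m]
    (Φ : Matrix n n ℂ →ₗ[ℂ] Matrix m m ℂ) : Prop :=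
  ∃ (e : ℕ) (A : Fin e → Matrix m n ℂ), IsKrausRep A Φ ∧
    ∃ Ψ : Matrix m m ℂ →ₗ[ℂ] Matrix (Fin e) (Fin e) ℂ,
      IsCPTP Ψ ∧ Ψ ∘ₗ Φ = complementMap A

def AntiDegradable {n m : Type*} [Fintype n] [DecidableEq n] [Fintype m] [DecidableEq m]
    (Φ : Matrix n n ℂ →ₗ[ℂ] Matrix m m ℂ) : Prop :=
  ∃ (e : ℕ) (A : Fin e → Matrix m n ℂ), IsKrausRep A Φ ∧
    ∃ Λ : Matrix (Fin e) (Fin e) ℂ →ₗ[ℂ] Matrix m m ℂ,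
      IsCPTP Λ ∧ Λ ∘ₗ complementMap A = Φ

/-!
The complement of the channel with Kraus operators `|x_k⟩⟨w_k|` has diagonal entries
`‖x_k‖² ⟨w_k|ρ|w_k⟩`, and its off-diagonal entries carry no information the channel needs.
Measuring the environment in the basis `e_k` and preparing `x_k / ‖x_k‖` therefore returns
`Σ_k ⟨w_k|ρ|w_k⟩ |x_k⟩⟨x_k|`, which is the channel itself. Where `x_k = 0` any unit vector
can be prepared instead, which keeps the recovery map trace preserving.
-/

section KrausMap

variable {n m ι : Type*} [Fintype n] [Fintype ι]

theorem krausMap_apply (A : ι → Matrix m n ℂ) (ρ : Matrix n n ℂ) :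
    krausMap A ρ = ∑ k, A k * ρ * (A k)ᴴ :=
  rfl

theorem complementMap_apply [Fintype m] (A : ι → Matrix m n ℂ) (ρ : Matrix n n ℂ) (j k : ι) :
    complementMap A ρ j k = (A j * ρ * (A k)ᴴ).trace :=
  rfl

-- The Choi matrix is the Gram matrix of the vectorised Kraus operators.
theorem choi_krausMap_posSemidef [Fintype m] [DecidableEq n] (A : ι → Matrix m n ℂ) :
    (choi (krausMap A)).PosSemidef := by
  set V : Matrix ι (n × m) ℂ := Matrix.of fun k p => star (A k p.2 p.1)
  have hchoi : choi (krausMap A) = Vᴴ * V := by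
    ext p q
    simp [V, choi, krausMap_apply, Matrix.mul_apply, Matrix.sum_apply, Matrix.single, ite_and]
  rw [hchoi]
  exact posSemidef_conjTranspose_mul_self V

theorem trace_krausMap [Fintype m] [DecidableEq n] {A : ι → Matrix m n ℂ}
    (hA : ∑ k, (A k)ᴴ * A k = 1) (ρ : Matrix n n ℂ) : (krausMap A ρ).trace = ρ.trace := by
  calc (krausMap A ρ).trace = ((∑ k, (A k)ᴴ * A k) * ρ).trace := by
        simp only [krausMap_apply, trace_sum, Finset.sum_mul]
        refine Finset.sum_congr rfl fun k _ => ?_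
        rw [trace_mul_comm, ← Matrix.mul_assoc]
    _ = ρ.trace := by rw [hA, Matrix.one_mul]

theorem isCPTP_krausMap [Fintype m] [DecidableEq n] {A : ι → Matrix m n ℂ}
    (hA : ∑ k, (A k)ᴴ * A k = 1) : IsCPTP (krausMap A) :=
  ⟨choi_krausMap_posSemidef A, trace_krausMap hA⟩

theorem isEmpty_of_sum_conjTranspose_mul_eq_one [Fintype m] [IsEmpty m] [DecidableEq n]
    {A : ι → Matrix m n ℂ} (hA : ∑ k, (A k)ᴴ * A k = 1) : IsEmpty n := by
  by_contra hn
  rw [not_isEmpty_iff] at hn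
  have hA0 : A = 0 := Subsingleton.elim _ _
  simp [hA0] at hA

theorem antiDegradable_of_isEmpty [Fintype m] [DecidableEq n] [DecidableEq m] [IsEmpty n]
    [IsEmpty m] (Φ : Matrix n n ℂ →ₗ[ℂ] Matrix m m ℂ) : AntiDegradable Φ :=
  ⟨0, Fin.elim0, ⟨fun _ => Subsingleton.elim _ _, Subsingleton.elim _ _⟩,
    krausMap (fun k : Fin 0 => Fin.elim0 k), isCPTP_krausMap (Subsingleton.elim _ _),
    LinearMap.ext fun _ => Subsingleton.elim _ _⟩

end KrausMap

section RankOne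

variable {n m : Type*} [Fintype n]

theorem vecMulVec_mul_mul_conjTranspose_vecMulVec {R : Type*} [CommSemiring R] [StarRing R]
    (x : m → R) (w : n → R) (ρ : Matrix n n R) :
    vecMulVec x (star w) * ρ * (vecMulVec x (star w))ᴴ
      = (star w ⬝ᵥ ρ *ᵥ w) • vecMulVec x (star x) := by
  rw [conjTranspose_vecMulVec, star_star, vecMulVec_mul, vecMulVec_mul_vecMulVec,
    ← dotProduct_mulVec, vecMulVec_smul]

theorem vecMulVec_single_mul_mul_conjTranspose {R : Type*} [CommSemiring R] [StarRing R]
    [DecidableEq n] (a : m → R) (k : n) (M : Matrix n n R) :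
    vecMulVec a (Pi.single k 1) * M * (vecMulVec a (Pi.single k 1))ᴴ
      = M k k • vecMulVec a (star a) := by
  have hstar : (Pi.single k 1 : n → R) = star (Pi.single k 1) := by simp
  rw [hstar, vecMulVec_mul_mul_conjTranspose_vecMulVec, ← hstar, mulVec_single_one,
    single_one_dotProduct, col_apply]

end RankOne

section Normalization

variable {m : Type*} [Fintype m]

-- `‖a‖⁻¹ • a` with the Euclidean norm written out; it is `0` when `a = 0`.
noncomputable def normalizedVec (a : m → ℂ) : m → ℂ :=
  ((√(∑ i, Complex.normSq (a i)) : ℝ) : ℂ)⁻¹ • a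

theorem vecMulVec_normalizedVec {n : Type*} (a : m → ℂ) (b : n → ℂ) :
    vecMulVec (normalizedVec a) b = ((√(∑ i, Complex.normSq (a i)) : ℝ) : ℂ)⁻¹ • vecMulVec a b :=
  smul_vecMulVec _ _ _

theorem star_dotProduct_self_eq_sqrt_sq (a : m → ℂ) :
    star a ⬝ᵥ a = ((√(∑ i, Complex.normSq (a i)) : ℝ) : ℂ) ^ 2 := by
  rw [← Complex.ofReal_pow, Real.sq_sqrt (Finset.sum_nonneg fun i _ => Complex.normSq_nonneg _)]
  push_cast
  simp [dotProduct, Complex.normSq_eq_conj_mul_self]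

theorem star_normalizedVec (a : m → ℂ) :
    star (normalizedVec a) = ((√(∑ i, Complex.normSq (a i)) : ℝ) : ℂ)⁻¹ • star a := by
  rw [normalizedVec, star_smul, star_inv₀, Complex.star_def, Complex.conj_ofReal]

theorem sqrt_sum_normSq_ne_zero {a : m → ℂ} (ha : a ≠ 0) :
    ((√(∑ i, Complex.normSq (a i)) : ℝ) : ℂ) ≠ 0 := by
  intro hr
  have hnorm := star_dotProduct_self_eq_sqrt_sq a
  rw [hr, zero_pow two_ne_zero, dotProduct_star_self_eq_zero] at hnorm
  exact ha hnorm

theorem star_normalizedVec_dotProduct_self {a : m → ℂ} (ha : a ≠ 0) :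
    star (normalizedVec a) ⬝ᵥ normalizedVec a = 1 := by
  have hr := sqrt_sum_normSq_ne_zero ha
  rw [star_normalizedVec, normalizedVec, smul_dotProduct, dotProduct_smul,
    star_dotProduct_self_eq_sqrt_sq, smul_eq_mul, smul_eq_mul]
  field_simp

theorem star_dotProduct_self_smul_vecMulVec_normalizedVec (a : m → ℂ) :
    (star a ⬝ᵥ a) • vecMulVec (normalizedVec a) (star (normalizedVec a))
      = vecMulVec a (star a) := by
  rcases eq_or_ne a 0 with rfl | ha
  · simp
  · have hr := sqrt_sum_normSq_ne_zero ha
    rw [star_normalizedVec, normalizedVec, smul_vecMulVec, vecMulVec_smul, smul_smul, smul_smul,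
      star_dotProduct_self_eq_sqrt_sq]
    field_simp
    rw [one_smul]

end Normalization

theorem vecMulVec_single_mul_mul_conjTranspose_of_smul {n m : Type*} [Fintype n]
    [DecidableEq n] [Fintype m] {a v : m → ℂ}
    (hv : (star a ⬝ᵥ a) • vecMulVec v (star v) = vecMulVec a (star a))
    (k : n) {M : Matrix n n ℂ} {t : ℂ} (hM : M k k = (star a ⬝ᵥ a) * t) :
    vecMulVec v (Pi.single k 1) * M * (vecMulVec v (Pi.single k 1))ᴴ
      = t • vecMulVec a (star a) := by
  rw [vecMulVec_single_mul_mul_conjTranspose, hM, mul_comm, mul_smul, hv]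

theorem sum_conjTranspose_vecMulVec_single_mul_self {n m : Type*} [Fintype n] [DecidableEq n]
    [Fintype m] {v : n → m → ℂ} (hv : ∀ k, star (v k) ⬝ᵥ v k = 1) :
    ∑ k, (vecMulVec (v k) (Pi.single k 1))ᴴ * vecMulVec (v k) (Pi.single k 1) = 1 := by
  simp only [conjTranspose_vecMulVec, vecMulVec_mul_vecMulVec, hv, one_smul]
  ext i j
  simp [Matrix.sum_apply, vecMulVec_apply, Pi.single_apply, one_apply]

theorem antiDegradable_krausMap_vecMulVec {n m : Type*} [Fintype n] [DecidableEq n]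
    [Fintype m] [DecidableEq m] [Nonempty m] {e : ℕ} (x : Fin e → m → ℂ) (w : Fin e → n → ℂ)
    (hTP : ∑ k, (vecMulVec (x k) (star (w k)))ᴴ * vecMulVec (x k) (star (w k)) = 1) :
    AntiDegradable (krausMap fun k => vecMulVec (x k) (star (w k))) := by
  classical
  set v : Fin e → m → ℂ := fun k =>
    if x k = 0 then Pi.single (Classical.arbitrary m) 1 else normalizedVec (x k)
  have hv_unit : ∀ k, star (v k) ⬝ᵥ v k = 1 := by
    intro k
    by_cases hx : x k = 0
    · simp [v, hx]
    · simpa [v, hx] using star_normalizedVec_dotProduct_self hx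
  have hv : ∀ k, (star (x k) ⬝ᵥ x k) • vecMulVec (v k) (star (v k))
      = vecMulVec (x k) (star (x k)) := by
    intro k
    by_cases hx : x k = 0
    · simp [hx]
    · simpa [v, hx] using star_dotProduct_self_smul_vecMulVec_normalizedVec (x k)
  refine ⟨e, _, ⟨fun _ => rfl, hTP⟩, krausMap fun k => vecMulVec (v k) (Pi.single k 1),
    isCPTP_krausMap ?_, LinearMap.ext fun ρ => ?_⟩
  · exact sum_conjTranspose_vecMulVec_single_mul_self hv_unit
  · rw [LinearMap.comp_apply, krausMap_apply, krausMap_apply]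
    refine Finset.sum_congr rfl fun k _ => ?_
    rw [vecMulVec_mul_mul_conjTranspose_vecMulVec]
    refine vecMulVec_single_mul_mul_conjTranspose_of_smul (hv k) k ?_
    rw [complementMap_apply, vecMulVec_mul_mul_conjTranspose_vecMulVec, trace_smul,
      trace_vecMulVec, dotProduct_comm (x k), smul_eq_mul, mul_comm]

/-- every pseudo-diagonal channel (the complement of an entanglement
breaking channel with rank-one Kraus operators `|x_k⟩⟨w_k|`) is degradable via the
CP map with Kraus operators `G_k = ‖x_k‖⁻¹ |x_k⟩⟨e_k|`; equivalently every
entanglement breaking channel is anti-degradable. -/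
theorem pseudoDiagonal_degradable {dA dB dE : ℕ}
    (x : Fin dB → Fin dE → ℂ) (w : Fin dB → Fin dA → ℂ)
    (hTP : ∑ k, (Matrix.vecMulVec (x k) (star (w k)))ᴴ *
        Matrix.vecMulVec (x k) (star (w k)) = 1) :
    (∀ ρ : Matrix (Fin dA) (Fin dA) ℂ,
      (∑ k, ((Real.sqrt (∑ i, Complex.normSq (x k i)) : ℂ)⁻¹ •
              Matrix.vecMulVec (x k) (Pi.single k 1)) *
            (Matrix.of fun j k' => (star (x j) ⬝ᵥ x k') * (star (w j) ⬝ᵥ ρ *ᵥ w k')) *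
            ((Real.sqrt (∑ i, Complex.normSq (x k i)) : ℂ)⁻¹ •
              Matrix.vecMulVec (x k) (Pi.single k 1))ᴴ)
        = ∑ k, Matrix.vecMulVec (x k) (star (w k)) * ρ *
            (Matrix.vecMulVec (x k) (star (w k)))ᴴ) ∧
    AntiDegradable (krausMap fun k => Matrix.vecMulVec (x k) (star (w k))) := by
  refine ⟨fun ρ => Finset.sum_congr rfl fun k _ => ?_, ?_⟩
  · rw [← vecMulVec_normalizedVec, vecMulVec_mul_mul_conjTranspose_vecMulVec]
    exact vecMulVec_single_mul_mul_conjTranspose_of_smul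
      (star_dotProduct_self_smul_vecMulVec_normalizedVec (x k)) k (of_apply _ _ _)
  · rcases isEmpty_or_nonempty (Fin dE) with hE | hE
    · have := isEmpty_of_sum_conjTranspose_mul_eq_one hTP
      exact antiDegradable_of_isEmpty _
    · exact antiDegradable_krausMap_vecMulVec x w hTP
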